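/- arXiv:1412.3622 — 2 statements merged into one kernel-verified Lean document; each statement's English description precedes it below -/
import Mathlib

section
/- Let f be a λ-eigenfunction of F_q^n with λ = (q−1)n − qh. Then for every vertex α and every subset I ⊆ {1,...,n}, the identity (x+(q−1)y)^{h−|Ī|} g_f^{Ī,α}(x,y) = (x'+(q−1)y')^{h−|I|} g_f^{I,α}(x',y') holds, where x' = x+(q−2)y and y' = −y, interpreted as an identity of rational functions (equivalently, after clearing negative exponents, of polynomials). -/
/-- Local distribution component v_j^{I,f}(α): sum of f over the face Γ^I(α)
intersected with the sphere of radius j around α. -/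
noncomputable def locdist {q n : ℕ} (f : (Fin n → Fin q) → ℂ) (α : Fin n → Fin q)
    (I : Finset (Fin n)) (j : ℕ) : ℂ :=
  ∑ β ∈ Finset.univ.filter
      (fun β : Fin n → Fin q => (∀ i ∈ Iᶜ, β i = α i) ∧ hammingDist α β = j), f β

/-!
A function on `F_q^n` splits as `f = ∑_S f_S` over sets `S` of coordinates, `f_S` being `f`
projected onto mean-zero functions in the coordinates of `S` and onto constants in the others.
Each `f_S` is an eigenfunction of the Hamming graph with eigenvalue `(q-1)n - q|S|`, and projecting
`A f = λ f` onto the `T`-component shows `f_T = 0` unless `|T| = h`. For a single component the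
local enumerator of a face factors over the free coordinates of the face: coordinate `i`
contributes `x - y` if `i ∈ S` and `x + (q-1)y` otherwise. Since `x' - y' = x + (q-1)y` and
`x' + (q-1)y' = x - y`, both sides of the identity are then the same product, coordinate by
coordinate.
-/

section Sphere

open Finset Function

variable {ι : Type*} [Fintype ι] [DecidableEq ι] {β : ι → Type*} [∀ i, DecidableEq (β i)]

lemma hammingDist_update_self_of_ne (x : ∀ i, β i) {i : ι} {c : β i} (hc : c ≠ x i) :
    hammingDist x (update x i c) = 1 := by
  rw [hammingDist, card_eq_one]
  refine ⟨i, eq_singleton_iff_unique_mem.mpr ⟨by simpa using hc.symm, fun j hj => ?_⟩⟩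
  by_contra hji
  simp [update_of_ne hji] at hj

lemma eq_update_of_hammingDist_eq_one {x y : ∀ i, β i} (h : hammingDist x y = 1) :
    ∃ i, y i ≠ x i ∧ y = update x i (y i) := by
  obtain ⟨i, hi⟩ := card_eq_one.mp h
  have hdiff : ∀ j, x j ≠ y j ↔ j = i := fun j => by
    simpa using congrArg (j ∈ ·) hi
  refine ⟨i, fun h => ((hdiff i).mpr rfl) h.symm, funext fun j => ?_⟩
  by_cases hji : j = i
  · subst hji; simp
  · rw [update_of_ne hji]; by_contra hne; exact hji ((hdiff j).mp (Ne.symm hne))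

variable [∀ i, Fintype (β i)]

theorem sum_hammingDist_eq_one {M : Type*} [AddCommMonoid M] (x : ∀ i, β i)
    (g : (∀ i, β i) → M) :
    ∑ y ∈ univ.filter (fun y => hammingDist x y = 1), g y =
      ∑ i, ∑ c ∈ univ.erase (x i), g (update x i c) := by
  rw [sum_sigma']
  symm
  refine sum_bij (fun p _ => update x p.1 p.2) (fun p hp => ?_) (fun p hp p' hp' heq => ?_)
    (fun y hy => ?_) (fun _ _ => rfl)
  · simpa using hammingDist_update_self_of_ne x (mem_erase.mp (mem_sigma.mp hp).2).1
  · have hp := (mem_erase.mp (mem_sigma.mp hp).2).1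
    obtain ⟨i, c⟩ := p
    obtain ⟨i', c'⟩ := p'
    obtain rfl : i = i' := by
      by_contra hii
      exact hp (by simpa [update_of_ne hii] using congrFun heq i)
    simpa using congrFun heq i
  · obtain ⟨i, hne, hy⟩ := eq_update_of_hammingDist_eq_one (mem_filter.mp hy).2
    exact ⟨⟨i, y i⟩, by simpa using hne, hy.symm⟩

end Sphere

section LocalEnumerator

open Finset Function

variable {q n : ℕ}

lemma pow_card_mul_prod_compl_ite {ι M : Type*} [Fintype ι] [DecidableEq ι] [CommMonoid M]
    (S I : Finset ι) (A B : M) :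
    A ^ #S * B ^ #I * ∏ i ∈ Iᶜ, (if i ∈ S then B else A) =
      B ^ #S * A ^ #Iᶜ * ∏ i ∈ I, (if i ∈ S then A else B) := by
  simp only [← prod_const]
  rw [← Fintype.prod_ite_mem S, ← Fintype.prod_ite_mem I, ← Fintype.prod_ite_mem Iᶜ,
    ← Fintype.prod_ite_mem S, ← Fintype.prod_ite_mem Iᶜ, ← Fintype.prod_ite_mem I]
  simp only [← prod_mul_distrib]
  refine prod_congr rfl fun i _ => ?_
  by_cases hS : i ∈ S <;> by_cases hI : i ∈ I <;> simp [hS, hI, mul_comm]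

lemma sum_prod_ite_mem {ι R : Type*} [Fintype ι] [DecidableEq ι] [CommSemiring R]
    (u v : ι → R) : ∑ S : Finset ι, ∏ i, (if i ∈ S then u i else v i) = ∏ i, (u i + v i) := by
  rw [Fintype.prod_add]
  refine sum_congr rfl fun S _ => ?_
  rw [prod_ite, filter_mem_eq_inter, univ_inter, filter_not, filter_mem_eq_inter, univ_inter,
    compl_eq_univ_sdiff]

def face (α : Fin n → Fin q) (J : Finset (Fin n)) : Finset (Fin n → Fin q) :=
  univ.filter fun β => ∀ i ∈ Jᶜ, β i = α i

@[simp]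
lemma mem_face {α β : Fin n → Fin q} {J : Finset (Fin n)} :
    β ∈ face α J ↔ ∀ i ∈ Jᶜ, β i = α i := by
  simp [face]

lemma face_empty (α : Fin n → Fin q) : face α ∅ = {α} := by
  ext β; simp [funext_iff]

lemma face_univ (α : Fin n → Fin q) : face α univ = univ := by
  ext β; simp

lemma filter_face_insert (α : Fin n → Fin q) {J : Finset (Fin n)} {j : Fin n} (hj : j ∉ J)
    (c : Fin q) : (face α (insert j J)).filter (fun β => β j = c) = face (update α j c) J := by
  ext β
  simp only [mem_filter, mem_face, mem_compl, mem_insert, not_or]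
  constructor
  · rintro ⟨hβ, rfl⟩ i hi
    by_cases hij : i = j
    · subst hij; simp
    · rw [update_of_ne hij]; exact hβ i ⟨hij, hi⟩
  · intro hβ
    refine ⟨fun i hi => by simpa [update_of_ne hi.1] using hβ i hi.2, by simpa using hβ j hj⟩

/-- `g` lies in the `S`-component `V_S` of the Hamming scheme (the span of the additive
characters with support `S`): averaging over a coordinate outside `S` fixes `g`, averaging over
a coordinate of `S` kills it. -/
def InComponent (S : Finset (Fin n)) (g : (Fin n → Fin q) → ℂ) : Prop :=
  ∀ i β, ∑ c, g (update β i c) = if i ∈ S then 0 else q * g β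

theorem sum_face_mul_prod_of_inComponent {S : Finset (Fin n)} {g : (Fin n → Fin q) → ℂ}
    (hg : InComponent S g) (a b : Fin n → ℂ) (J : Finset (Fin n)) (α : Fin n → Fin q) :
    ∑ β ∈ face α J, g β * ∏ i ∈ J, (a i + if β i = α i then b i else 0) =
      (∏ i ∈ J, if i ∈ S then b i else q * a i + b i) * g α := by
  induction J using Finset.induction_on generalizing α with
  | empty => simp [face_empty]
  | @insert j J hj ih =>
    have hslice : ∀ c, ∑ β ∈ face (update α j c) J,
        g β * ∏ i ∈ insert j J, (a i + if β i = α i then b i else 0) =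
          (∏ i ∈ J, if i ∈ S then b i else q * a i + b i) *
            ((a j + if c = α j then b j else 0) * g (update α j c)) := by
      intro c
      rw [mul_left_comm, ← ih, mul_sum]
      refine sum_congr rfl fun β hβ => ?_
      have hβj : β j = c := by simpa using mem_face.mp hβ j (by simpa using hj)
      have hJ : ∀ i ∈ J, α i = update α j c i := fun i hi =>
        (update_of_ne (ne_of_mem_of_not_mem hi hj) _ _).symm
      rw [prod_insert hj, hβj, prod_congr rfl fun i hi => by rw [hJ i hi]]
      ring
    rw [← sum_fiberwise _ (fun β => β j), prod_insert hj]
    simp_rw [filter_face_insert α hj, hslice, ← mul_sum]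
    have hsplit : ∀ c, (a j + if c = α j then b j else 0) * g (update α j c) =
        a j * g (update α j c) + if c = α j then b j * g α else 0 := by
      intro c
      split_ifs with hc
      · rw [hc, update_eq_self]; ring
      · ring
    simp_rw [hsplit, sum_add_distrib, ← mul_sum, hg j α, sum_ite_eq', mem_univ, if_true]
    split_ifs <;> ring

theorem sum_hammingDist_eq_one_of_inComponent {S : Finset (Fin n)} {g : (Fin n → Fin q) → ℂ}
    (hg : InComponent S g) (α : Fin n → Fin q) :
    ∑ β ∈ univ.filter (fun β => hammingDist α β = 1), g β =
      (((q : ℂ) - 1) * n - q * #S) * g α := by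
  have hcoord : ∀ i, ∑ c ∈ univ.erase (α i), g (update α i c) =
      (if i ∈ S then 0 else q * g α) - g α := fun i => by
    rw [sum_erase_eq_sub (mem_univ _), hg i α, update_eq_self]
  rw [sum_hammingDist_eq_one, sum_congr rfl fun i _ => hcoord i, sum_sub_distrib, sum_ite,
    sum_const_zero, zero_add, sum_const, sum_const, card_univ, Fintype.card_fin, filter_not,
    filter_mem_eq_inter, univ_inter, ← compl_eq_univ_sdiff, card_compl, Fintype.card_fin,
    nsmul_eq_mul, nsmul_eq_mul, Nat.cast_sub (by simpa using card_le_univ S)]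
  ring

/-- The local enumerator `g_f^{J,α}(x, y)`. -/
noncomputable def localEnum (f : (Fin n → Fin q) → ℂ) (α : Fin n → Fin q) (J : Finset (Fin n))
    (x y : ℂ) : ℂ :=
  ∑ j ∈ range (J.card + 1), locdist f α J j * y ^ j * x ^ (J.card - j)

lemma hammingDist_eq_card_of_mem_face {α β : Fin n → Fin q} {J : Finset (Fin n)}
    (hβ : β ∈ face α J) : hammingDist α β = #{i ∈ J | ¬β i = α i} := by
  rw [hammingDist]
  congr 1
  ext i
  simp only [mem_filter, mem_univ, true_and]
  refine ⟨fun h => ⟨?_, fun h' => h h'.symm⟩, fun h h' => h.2 h'.symm⟩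
  by_contra hi
  exact h (mem_face.mp hβ i (mem_compl.mpr hi)).symm

theorem localEnum_eq_sum_face (f : (Fin n → Fin q) → ℂ) (α : Fin n → Fin q)
    (J : Finset (Fin n)) (x y : ℂ) :
    localEnum f α J x y = ∑ β ∈ face α J, f β * ∏ i ∈ J, if β i = α i then x else y := by
  have hmaps : ∀ β ∈ face α J, hammingDist α β ∈ range (J.card + 1) := fun β hβ => by
    rw [mem_range, Nat.lt_succ_iff, hammingDist_eq_card_of_mem_face hβ]
    exact card_filter_le _ _
  rw [localEnum, ← sum_fiberwise_of_maps_to hmaps]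
  refine sum_congr rfl fun j _ => ?_
  rw [locdist, ← filter_filter, sum_mul, sum_mul]
  refine sum_congr rfl fun β hβ => ?_
  obtain ⟨hface, rfl⟩ := mem_filter.mp hβ
  have hcard := card_filter_add_card_filter_not (s := J) (p := fun i => β i = α i)
  rw [prod_ite, prod_const, prod_const, mul_assoc, mul_comm (y ^ _),
    hammingDist_eq_card_of_mem_face hface]
  congr 3
  omega

theorem localEnum_of_inComponent {S : Finset (Fin n)} {g : (Fin n → Fin q) → ℂ}
    (hg : InComponent S g) (α : Fin n → Fin q) (J : Finset (Fin n)) (x y : ℂ) :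
    localEnum g α J x y = (∏ i ∈ J, if i ∈ S then x - y else x + (q - 1) * y) * g α := by
  have hweight : ∀ β : Fin n → Fin q, ∀ i,
      (if β i = α i then x else y) = y + if β i = α i then x - y else 0 := by
    intro β i; split_ifs <;> ring
  have hfactor : ∀ i, (if i ∈ S then x - y else x + (q - 1) * y) =
      if i ∈ S then x - y else q * y + (x - y) := by
    intro i; split_ifs <;> ring
  simp_rw [localEnum_eq_sum_face, hweight, hfactor]
  exact sum_face_mul_prod_of_inComponent hg (fun _ => y) (fun _ => x - y) J α

theorem localEnum_sum {ι : Type*} (s : Finset ι) (g : ι → (Fin n → Fin q) → ℂ)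
    (α : Fin n → Fin q) (J : Finset (Fin n)) (x y : ℂ) :
    localEnum (∑ k ∈ s, g k) α J x y = ∑ k ∈ s, localEnum (g k) α J x y := by
  simp_rw [localEnum_eq_sum_face, Finset.sum_apply, sum_mul]
  exact sum_comm

theorem localEnum_zero (α : Fin n → Fin q) (J : Finset (Fin n)) (x y : ℂ) :
    localEnum 0 α J x y = 0 := by
  simp [localEnum_eq_sum_face]

theorem localEnum_dual_of_inComponent {S : Finset (Fin n)} {g : (Fin n → Fin q) → ℂ}
    (hg : InComponent S g) (α : Fin n → Fin q) (I : Finset (Fin n)) (x y : ℂ) :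
    (x + (q - 1) * y) ^ #S * (x - y) ^ #I * localEnum g α Iᶜ x y =
      (x - y) ^ #S * (x + (q - 1) * y) ^ #Iᶜ * localEnum g α I (x + (q - 2) * y) (-y) := by
  have hA : x + (q - 2) * y - -y = x + (q - 1) * y := by ring
  have hB : x + (q - 2) * y + (q - 1) * -y = x - y := by ring
  rw [localEnum_of_inComponent hg, localEnum_of_inComponent hg, hA, hB, ← mul_assoc, ← mul_assoc,
    pow_card_mul_prod_compl_ite]

noncomputable def componentKernel (S : Finset (Fin n)) (β γ : Fin n → Fin q) : ℂ :=
  ∏ i, if i ∈ S then (if γ i = β i then 1 else 0) - (q : ℂ)⁻¹ else (q : ℂ)⁻¹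

noncomputable def componentProj (S : Finset (Fin n)) :
    ((Fin n → Fin q) → ℂ) →ₗ[ℂ] (Fin n → Fin q) → ℂ :=
  Matrix.mulVecLin (Matrix.of (componentKernel S))

lemma componentProj_apply (S : Finset (Fin n)) (f : (Fin n → Fin q) → ℂ) (β : Fin n → Fin q) :
    componentProj S f β = ∑ γ, componentKernel S β γ * f γ :=
  rfl

lemma sum_componentKernel (β γ : Fin n → Fin q) :
    ∑ S, componentKernel S β γ = if γ = β then 1 else 0 := by
  simp_rw [componentKernel, sum_prod_ite_mem, sub_add_cancel, Fintype.prod_boole]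
  congr 1
  exact propext funext_iff.symm

theorem sum_componentProj (f : (Fin n → Fin q) → ℂ) : ∑ S, componentProj S f = f := by
  funext β
  simp_rw [Finset.sum_apply, componentProj_apply]
  rw [sum_comm]
  simp_rw [← sum_mul, sum_componentKernel, ite_mul, one_mul, zero_mul, sum_ite_eq', mem_univ,
    if_true]

lemma sum_componentKernel_update [NeZero q] (S : Finset (Fin n)) (β γ : Fin n → Fin q)
    (i : Fin n) :
    ∑ c, componentKernel S (update β i c) γ = if i ∈ S then 0 else q * componentKernel S β γ := by
  have hsplit : ∀ b : Fin n → Fin q, componentKernel S b γ =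
      (if i ∈ S then (if γ i = b i then 1 else 0) - (q : ℂ)⁻¹ else (q : ℂ)⁻¹) *
        ∏ j ∈ univ.erase i, if j ∈ S then (if γ j = b j then 1 else 0) - (q : ℂ)⁻¹
          else (q : ℂ)⁻¹ :=
    fun b => (mul_prod_erase univ _ (mem_univ i)).symm
  have hrest : ∀ c, ∏ j ∈ univ.erase i, (if j ∈ S then
      (if γ j = update β i c j then 1 else 0) - (q : ℂ)⁻¹ else (q : ℂ)⁻¹) =
      ∏ j ∈ univ.erase i, if j ∈ S then (if γ j = β j then 1 else 0) - (q : ℂ)⁻¹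
        else (q : ℂ)⁻¹ :=
    fun c => prod_congr rfl fun j hj => by rw [update_of_ne (ne_of_mem_erase hj)]
  have hq : (q : ℂ) ≠ 0 := Nat.cast_ne_zero.mpr (NeZero.ne q)
  simp_rw [hsplit, hrest, update_self, ← sum_mul]
  split_ifs
  · simp [sum_sub_distrib, hq]
  · simp [hq]

theorem inComponent_componentProj [NeZero q] (S : Finset (Fin n)) (f : (Fin n → Fin q) → ℂ) :
    InComponent S (componentProj S f) := by
  intro i β
  simp_rw [componentProj_apply]
  rw [sum_comm]
  simp_rw [← sum_mul, sum_componentKernel_update]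
  split_ifs <;> simp [mul_sum, mul_assoc]

theorem componentProj_of_inComponent [NeZero q] {S : Finset (Fin n)}
    {g : (Fin n → Fin q) → ℂ} (hg : InComponent S g) (T : Finset (Fin n)) :
    componentProj T g = if T = S then g else 0 := by
  funext β
  have hq : (q : ℂ) ≠ 0 := Nat.cast_ne_zero.mpr (NeZero.ne q)
  have hkernel : ∀ γ, componentKernel T β γ * g γ = g γ * ∏ i, ((if i ∈ T then -(q : ℂ)⁻¹
      else (q : ℂ)⁻¹) + if γ i = β i then (if i ∈ T then 1 else 0) else 0) := fun γ => by
    rw [mul_comm, componentKernel]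
    congr 1
    refine prod_congr rfl fun i _ => ?_
    split_ifs <;> ring
  have hfactor : ∀ i, (if i ∈ S then (if i ∈ T then 1 else 0)
      else q * (if i ∈ T then -(q : ℂ)⁻¹ else (q : ℂ)⁻¹) + if i ∈ T then 1 else 0) =
      if (i ∈ T ↔ i ∈ S) then 1 else 0 := fun i => by
    by_cases hS : i ∈ S <;> by_cases hT : i ∈ T <;> simp [hS, hT, hq]
  rw [componentProj_apply, sum_congr rfl fun γ _ => hkernel γ, ← face_univ β,
    sum_face_mul_prod_of_inComponent hg, prod_congr rfl fun i _ => hfactor i,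
    Fintype.prod_boole]
  by_cases hTS : T = S
  · simp [hTS]
  · simp [hTS, ← Finset.ext_iff]

theorem componentProj_eq_zero_of_eigen [NeZero q] {h : ℕ} {f : (Fin n → Fin q) → ℂ}
    (hf : ∀ α, ∑ β ∈ univ.filter (fun β => hammingDist α β = 1), f β
      = (((q : ℂ) - 1) * n - q * h) * f α)
    {T : Finset (Fin n)} (hT : #T ≠ h) : componentProj T f = 0 := by
  set eigenvalue : ℕ → ℂ := fun k => ((q : ℂ) - 1) * n - q * k
  have hspectral : ∑ S, eigenvalue #S • componentProj S f = eigenvalue h • f := by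
    funext α
    rw [Pi.smul_apply, smul_eq_mul, ← hf α]
    conv_rhs => rw [← sum_componentProj f]
    simp_rw [Finset.sum_apply]
    rw [sum_comm]
    refine sum_congr rfl fun S _ => ?_
    rw [sum_hammingDist_eq_one_of_inComponent (inComponent_componentProj S f)]
    rfl
  have hproj := congrArg (componentProj T) hspectral
  simp_rw [map_sum, map_smul, componentProj_of_inComponent (inComponent_componentProj _ f),
    smul_ite, smul_zero, sum_ite_eq, mem_univ, if_true] at hproj
  have hne : eigenvalue #T - eigenvalue h ≠ 0 := by
    have hq : (q : ℂ) ≠ 0 := Nat.cast_ne_zero.mpr (NeZero.ne q)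
    have hcard : ((#T : ℕ) : ℂ) ≠ h := Nat.cast_injective.ne hT
    simp only [eigenvalue, sub_sub_sub_cancel_left, ← mul_sub]
    exact mul_ne_zero hq (sub_ne_zero.mpr hcard.symm)
  exact (smul_eq_zero.mp (by rw [sub_smul, hproj, sub_self])).resolve_left hne

end LocalEnumerator

theorem stmt6_general (q n h : ℕ) (hq : 2 ≤ q)
    (f : (Fin n → Fin q) → ℂ)
    (hf : ∀ α, ∑ β ∈ Finset.univ.filter (fun β => hammingDist α β = 1), f β
            = (((q:ℂ)-1)*n - q*h) * f α)
    (α : Fin n → Fin q) (I : Finset (Fin n)) (x y : ℂ) :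
    (x + ((q:ℂ)-1)*y)^h * (x - y)^I.card *
        ∑ j ∈ Finset.range (Iᶜ.card + 1), locdist f α Iᶜ j * y^j * x^(Iᶜ.card - j) =
      (x - y)^h * (x + ((q:ℂ)-1)*y)^(Iᶜ.card) *
        ∑ j ∈ Finset.range (I.card + 1),
          locdist f α I j * (-y)^j * (x + ((q:ℂ)-2)*y)^(I.card - j) := by
  have : NeZero q := ⟨by omega⟩
  change _ * localEnum f α Iᶜ x y = _ * localEnum f α I (x + ((q:ℂ)-2)*y) (-y)
  rw [← sum_componentProj f, localEnum_sum, localEnum_sum, Finset.mul_sum, Finset.mul_sum]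
  refine Finset.sum_congr rfl fun S _ => ?_
  by_cases hS : S.card = h
  · rw [← hS, localEnum_dual_of_inComponent (inComponent_componentProj S f)]
  · rw [componentProj_eq_zero_of_eigen hf hS, localEnum_zero, localEnum_zero, mul_zero, mul_zero]

/-- Relation between the local enumerators of a λ-eigenfunction in two orthogonal
faces: (x+(q−1)y)^{h−|Ī|} g_f^{Ī,α}(x,y) = (x'+(q−1)y')^{h−|I|} g_f^{I,α}(x',y'),
x' = x+(q−2)y, y' = −y (so x'+(q−1)y' = x−y), stated with cleared denominators. -/
theorem stmt6 (q n h : ℕ) (hq : 2 ≤ q) (hh : h ≤ n)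
    (f : (Fin n → Fin q) → ℂ)
    (hf : ∀ α, ∑ β ∈ Finset.univ.filter (fun β => hammingDist α β = 1), f β
            = (((q:ℂ)-1)*n - q*h) * f α)
    (α : Fin n → Fin q) (I : Finset (Fin n)) (x y : ℂ) :
    (x + ((q:ℂ)-1)*y)^h * (x - y)^I.card *
        ∑ j ∈ Finset.range (Iᶜ.card + 1), locdist f α Iᶜ j * y^j * x^(Iᶜ.card - j) =
      (x - y)^h * (x + ((q:ℂ)-1)*y)^(Iᶜ.card) *
        ∑ j ∈ Finset.range (I.card + 1),
          locdist f α I j * (-y)^j * (x + ((q:ℂ)-2)*y)^(I.card - j) :=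
  stmt6_general q n h hq f hf α I x y
end

section
/- Let f be a λ-eigenfunction of F_q^n with λ = (q−1)n−qh, and let I ⊆ {1,...,n} with |I| = k ≤ min{h, n−h}. Then for every vertex α and every j with 0 ≤ j ≤ n−k, one has v_j^{Ī,f}(α) = Σ_{i=0}^{j} r_{ij} v_i^{I,f}(α), where r_{ij} = (−1)^i Σ_{l=0}^{j−i} P_{j−i−l}^{(q)}(h−k; n−2k) (q−2)^l C(k−i, l). -/
/-!
Every function on `ι → G` (`G` finite abelian of order `q`, `#ι = n`) is a combination of the
characters `ψ`, and `ψ` is an eigenfunction of the Hamming graph with eigenvalue `(q-1) n - q w`,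
`w = #ψ.coordSupport`. So a `λ`-eigenfunction involves only characters with `w = h`, and since both
sides are linear in `f` it suffices to treat such a character. On the face with free coordinates `I`
the local distribution of `ψ` has generating polynomial
`ψ α * (1 + (q-1) X) ^ (#I - a) * (1 - X) ^ a` with `a = #(ψ.coordSupport ∩ I)`.
The homogenized substitution `X ↦ -X / (1 + (q-2) X)` in degree `k = #I` swaps `1 + (q-1) X` and
`1 - X`, and multiplying by `(1 + (q-1) X) ^ (n-k-h) * (1 - X) ^ (h-k)` then yields the generating
polynomial on the complementary face, where `ψ` has weight `h - a`. Comparing coefficients of `X ^ j`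
gives the claim.
-/

/-- The q-ary Krawtchouk polynomial value P_i^{(q)}(t;N). -/
def kraw (q i t N : ℕ) : ℤ :=
  ∑ j ∈ Finset.range (i+1),
    (-1:ℤ)^j * ((q:ℤ)-1)^(i-j) * (t.choose j : ℤ) * ((N-t).choose (i-j) : ℤ)

open Finset Polynomial

section Krawtchouk
variable {R : Type*} [CommRing R]

lemma coeff_one_add_C_mul_X_pow (c : R) (m i : ℕ) :
    ((1 + C c * X) ^ m).coeff i = m.choose i * c ^ i := by
  have : (1 + C c * X) ^ m = ((1 + X) ^ m).comp (C c * X) := by simp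
  rw [this, comp_C_mul_X_coeff, coeff_one_add_X_pow]

lemma one_sub_X_eq_one_add_C_mul_X : (1 - X : R[X]) = 1 + C (-1) * X := by
  simp [sub_eq_add_neg]

variable (R) in
noncomputable def krawGenPoly (q t N : ℕ) : R[X] :=
  (1 + C ((q : R) - 1) * X) ^ (N - t) * (1 - X) ^ t

lemma kraw_eq_coeff_krawGenPoly (q i t N : ℕ) :
    (kraw q i t N : R) = (krawGenPoly R q t N).coeff i := by
  rw [krawGenPoly, one_sub_X_eq_one_add_C_mul_X, mul_comm, coeff_mul,
    Nat.sum_antidiagonal_eq_sum_range_succ_mk]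
  simp only [kraw, coeff_one_add_C_mul_X_pow]
  push_cast
  exact sum_congr rfl fun j _ => by ring

lemma coeff_one_krawGenPoly (q t N : ℕ) :
    (krawGenPoly R q t N).coeff 1 = ((q : R) - 1) * (N - t : ℕ) - t := by
  rw [← kraw_eq_coeff_krawGenPoly]
  simp only [kraw, sum_range_succ, range_one, sum_singleton, Nat.choose_zero_right,
    Nat.choose_one_right, Nat.sub_self, Nat.sub_zero]
  push_cast
  ring

lemma krawGenPoly_mul_krawGenPoly (q : ℕ) {t N t' N' : ℕ} (ht : t ≤ N) (ht' : t' ≤ N') :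
    krawGenPoly R q t N * krawGenPoly R q t' N' = krawGenPoly R q (t + t') (N + N') := by
  rw [krawGenPoly, krawGenPoly, krawGenPoly, show N + N' - (t + t') = (N - t) + (N' - t') by omega,
    pow_add, pow_add]
  ring

lemma homogenize_one_add_C_mul_X_pow (c : R) (m : ℕ) :
    ((1 + C c * X) ^ m).homogenize m =
      (MvPolynomial.X 1 + MvPolynomial.C c * MvPolynomial.X 0) ^ m := by
  induction m with
  | zero => simp
  | succ m ih =>
    have h1 : (1 + C c * X : R[X]).natDegree ≤ 1 := by compute_degree!
    rw [pow_succ, homogenize_mul _ _ ((natDegree_pow_le_of_le m h1).trans_eq (mul_one m)) h1, ih]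
    simp [pow_succ]

lemma homogenize_krawGenPoly (q : ℕ) {a k : ℕ} (ha : a ≤ k) :
    (krawGenPoly R q a k).homogenize k =
      (MvPolynomial.X 1 + MvPolynomial.C ((q : R) - 1) * MvPolynomial.X 0) ^ (k - a) *
        (MvPolynomial.X 1 + MvPolynomial.C (-1) * MvPolynomial.X 0) ^ a := by
  obtain ⟨b, rfl⟩ := Nat.exists_eq_add_of_le' ha
  have hdeg (c : R) (m : ℕ) : ((1 + C c * X) ^ m).natDegree ≤ m :=
    (natDegree_pow_le_of_le m (by compute_degree!)).trans_eq (mul_one m)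
  rw [krawGenPoly, one_sub_X_eq_one_add_C_mul_X, Nat.add_sub_cancel, homogenize_mul _ _ (hdeg _ _)
    (hdeg _ _), homogenize_one_add_C_mul_X_pow, homogenize_one_add_C_mul_X_pow]

-- `P ↦ (1 + (q-2) X) ^ k * P (-X / (1 + (q-2) X))`, through the degree-`k` homogenization of `P`
variable (R) in
noncomputable def krawSubst (q k : ℕ) : R[X] →ₗ[R] R[X] :=
  (MvPolynomial.aeval ![-X, 1 + C ((q : R) - 2) * X]).toLinearMap ∘ₗ homogenizeLM k

lemma krawSubst_apply (q k : ℕ) (P : R[X]) :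
    krawSubst R q k P =
      ∑ i ∈ range (k + 1), C (P.coeff i) * (-X) ^ i * (1 + C ((q : R) - 2) * X) ^ (k - i) := by
  simp [krawSubst, homogenize, Nat.sum_antidiagonal_eq_sum_range_succ_mk,
    MvPolynomial.aeval_monomial, mul_assoc]

lemma krawSubst_krawGenPoly (q : ℕ) {a k : ℕ} (ha : a ≤ k) :
    krawSubst R q k (krawGenPoly R q a k) = krawGenPoly R q (k - a) k := by
  rw [krawSubst, LinearMap.comp_apply, homogenizeLM_apply, homogenize_krawGenPoly q ha,
    krawGenPoly, Nat.sub_sub_self ha]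
  simp only [AlgHom.toLinearMap_apply, map_mul, map_pow, map_add, MvPolynomial.aeval_X,
    MvPolynomial.aeval_C, algebraMap_eq, Matrix.cons_val_zero, Matrix.cons_val_one]
  simp only [map_sub, map_natCast, map_ofNat, map_neg, map_one]
  ring

lemma coeff_sum_C_mul_X_pow_mul {k : ℕ} (v : ℕ → R) (Q : ℕ → R[X]) (hv : ∀ i, k < i → v i = 0)
    (j : ℕ) :
    (∑ i ∈ range (k + 1), C (v i) * X ^ i * Q i).coeff j =
      ∑ i ∈ range (j + 1), v i * (Q i).coeff (j - i) := by
  set g : ℕ → R := fun i => if i ≤ j then v i * (Q i).coeff (j - i) else 0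
  have hg (i : ℕ) : (C (v i) * X ^ i * Q i).coeff j = g i := by
    rw [mul_assoc, coeff_C_mul, coeff_X_pow_mul']
    split_ifs <;> simp [g, *]
  calc (∑ i ∈ range (k + 1), C (v i) * X ^ i * Q i).coeff j
      = ∑ i ∈ range (k + j + 1), g i := by
        rw [finsetSum_coeff]
        simp_rw [hg]
        refine sum_subset (range_subset_range.2 (by omega)) fun i _ hi => ?_
        simp [g, hv i (by simpa using hi)]
    _ = ∑ i ∈ range (j + 1), g i :=
        (sum_subset (range_subset_range.2 (by omega)) fun i _ hi => if_neg (by simpa using hi)).symm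
    _ = _ := sum_congr rfl fun i hi => if_pos (by simpa [Nat.lt_succ_iff] using hi)

lemma coeff_krawGenPoly_mul_krawSubst (q t N k : ℕ) {P : R[X]} (hP : ∀ i, k < i → P.coeff i = 0)
    (j : ℕ) :
    (krawGenPoly R q t N * krawSubst R q k P).coeff j =
      ∑ i ∈ range (j + 1), ((-1) ^ i * ∑ l ∈ range (j - i + 1),
        (kraw q (j - i - l) t N : R) * ((q : R) - 2) ^ l * ((k - i).choose l : R)) * P.coeff i := by
  have hterm (i : ℕ) (D : R[X]) : krawGenPoly R q t N * (C (P.coeff i) * (-X) ^ i * D ^ (k - i)) =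
      C (P.coeff i) * X ^ i * (C ((-1) ^ i) * (D ^ (k - i) * krawGenPoly R q t N)) := by
    rw [neg_pow, map_pow, map_neg, map_one]
    ring
  simp only [krawSubst_apply, mul_sum, hterm]
  rw [coeff_sum_C_mul_X_pow_mul _ _ hP]
  refine sum_congr rfl fun i _ => ?_
  rw [coeff_C_mul, coeff_mul, Nat.sum_antidiagonal_eq_sum_range_succ_mk]
  simp only [coeff_one_add_C_mul_X_pow, ← kraw_eq_coeff_krawGenPoly, mul_sum, sum_mul]
  exact sum_congr rfl fun l _ => by ring

end Krawtchouk

section LocalDistribution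
variable {ι G R : Type*} [Fintype ι] [DecidableEq G] [CommRing R]

lemma X_pow_hammingDist (α β : ι → G) :
    (X : R[X]) ^ hammingDist α β = ∏ t, if α t = β t then 1 else X := by
  rw [prod_ite, prod_const_one, one_mul, prod_const]
  rfl

variable [DecidableEq ι]

lemma hammingDist_le_card {α β : ι → G} {I : Finset ι} (h : ∀ i ∈ Iᶜ, β i = α i) :
    hammingDist α β ≤ #I :=
  card_le_card fun t ht => by
    by_contra hI
    exact (mem_filter.1 ht).2 (h t (mem_compl.2 hI)).symm

variable [Fintype G]

noncomputable def localDistPoly (α : ι → G) (I : Finset ι) : ((ι → G) → R) →ₗ[R] R[X] where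
  toFun f := ∑ β ∈ univ.filter (fun β => ∀ i ∈ Iᶜ, β i = α i), C (f β) * X ^ hammingDist α β
  map_add' f g := by simp [add_mul, sum_add_distrib]
  map_smul' c f := by simp [mul_sum, smul_eq_C_mul, mul_assoc]

lemma coeff_localDistPoly (α : ι → G) (I : Finset ι) (f : (ι → G) → R) (j : ℕ) :
    (localDistPoly α I f).coeff j =
      ∑ β ∈ univ.filter (fun β => (∀ i ∈ Iᶜ, β i = α i) ∧ hammingDist α β = j), f β := by
  simp only [localDistPoly, LinearMap.coe_mk, AddHom.coe_mk, finsetSum_coeff, sum_filter]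
  refine sum_congr rfl fun β _ => ?_
  split_ifs <;> simp_all [eq_comm]

lemma coeff_localDistPoly_eq_zero (α : ι → G) (I : Finset ι) (f : (ι → G) → R) {j : ℕ}
    (hj : #I < j) : (localDistPoly α I f).coeff j = 0 := by
  rw [coeff_localDistPoly]
  refine sum_eq_zero fun β hβ => ?_
  obtain ⟨-, hface, hdist⟩ := mem_filter.1 hβ
  exact absurd (hammingDist_le_card hface) (by omega)

noncomputable def hammingAdj : ((ι → G) → R) →ₗ[R] ((ι → G) → R) where
  toFun f α := ∑ β ∈ univ.filter (fun β => hammingDist α β = 1), f β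
  map_add' f g := by ext; simp [sum_add_distrib]
  map_smul' c f := by ext; simp [mul_sum]

lemma hammingAdj_apply_eq_coeff (f : (ι → G) → R) (α : ι → G) :
    hammingAdj f α = (localDistPoly α univ f).coeff 1 := by
  simp [hammingAdj, coeff_localDistPoly]

end LocalDistribution

lemma AddChar.map_sum_eq_prod {A M ι : Type*} [AddCommMonoid A] [CommMonoid M] (ψ : AddChar A M)
    (s : Finset ι) (f : ι → A) : ψ (∑ i ∈ s, f i) = ∏ i ∈ s, ψ (f i) := by
  classical
  induction s using Finset.induction_on with
  | empty => simp
  | insert a s ha ih => rw [sum_insert ha, prod_insert ha, AddChar.map_add_eq_mul, ih]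

section Characters
variable {ι G R : Type*} [DecidableEq ι] [AddCommGroup G] [CommMonoid R]

noncomputable def AddChar.coord (ψ : AddChar (ι → G) R) (t : ι) : AddChar G R :=
  ψ.compAddMonoidHom (AddMonoidHom.single (fun _ => G) t)

variable [Fintype ι]

open Classical in
noncomputable def AddChar.coordSupport (ψ : AddChar (ι → G) R) : Finset ι :=
  univ.filter fun t => ψ.coord t ≠ 0

lemma AddChar.apply_eq_prod_coord (ψ : AddChar (ι → G) R) (β : ι → G) :
    ψ β = ∏ t, ψ.coord t (β t) := by
  conv_lhs => rw [← univ_sum_single β]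
  exact ψ.map_sum_eq_prod _ _

end Characters

lemma sum_addChar_mul_ite {G R : Type*} [AddGroup G] [Fintype G] [DecidableEq G] [CommRing R]
    [IsDomain R] (φ : AddChar G R) (a : G) :
    ∑ x, C (φ x) * (if a = x then 1 else X) =
      C (φ a) * (if φ = 0 then 1 + C ((Fintype.card G : R) - 1) * X else 1 - X) := by
  classical
  have hsplit (x : G) : C (φ x) * (if a = x then 1 else X) =
      C (φ x) * X + if a = x then C (φ x) * (1 - X) else 0 := by
    split_ifs <;> ring
  simp only [hsplit, sum_add_distrib, ← sum_mul, ← map_sum, AddChar.sum_eq_ite, sum_ite_eq,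
    mem_univ, if_true]
  split_ifs with h
  · simp only [h, AddChar.zero_apply, map_one, map_sub, map_natCast]
    ring
  · simp

section CharacterDistribution
variable {ι G R : Type*} [Fintype ι] [DecidableEq ι] [AddCommGroup G] [Fintype G] [DecidableEq G]
  [CommRing R] [IsDomain R]

lemma localDistPoly_addChar (ψ : AddChar (ι → G) R) (α : ι → G) (I : Finset ι) :
    localDistPoly α I ψ = C (ψ α) * krawGenPoly R (Fintype.card G) #(ψ.coordSupport ∩ I) #I := by
  classical
  set T : ∀ t, Finset G := fun t => if t ∈ I then univ else {α t}
  have hface : univ.filter (fun β => ∀ i ∈ Iᶜ, β i = α i) = Fintype.piFinset T := by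
    ext β
    simp only [mem_filter, mem_univ, true_and, mem_compl, Fintype.mem_piFinset, T]
    refine forall_congr' fun t => ?_
    by_cases ht : t ∈ I <;> simp [ht]
  have hfactor (t : ι) : ∑ x ∈ T t, C (ψ.coord t x) * (if α t = x then 1 else X) =
      C (ψ.coord t (α t)) * if t ∈ I then
        (if ψ.coord t = 0 then 1 + C ((Fintype.card G : R) - 1) * X else 1 - X) else 1 := by
    by_cases ht : t ∈ I
    · simp only [T, if_pos ht, sum_addChar_mul_ite]
    · simp [T, ht]
  calc localDistPoly α I ψ = ∏ t, ∑ x ∈ T t, C (ψ.coord t x) * (if α t = x then 1 else X) := by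
        rw [prod_univ_sum, ← hface]
        refine sum_congr rfl fun β _ => ?_
        rw [ψ.apply_eq_prod_coord, map_prod, X_pow_hammingDist, ← prod_mul_distrib]
    _ = C (ψ α) * ∏ t ∈ I,
          (if ψ.coord t = 0 then 1 + C ((Fintype.card G : R) - 1) * X else 1 - X) := by
        simp_rw [hfactor]
        rw [prod_mul_distrib, ← map_prod, ← ψ.apply_eq_prod_coord, prod_ite_mem, univ_inter]
    _ = _ := by
        rw [prod_ite, prod_const, prod_const, krawGenPoly, AddChar.coordSupport, filter_inter,
          univ_inter]
        have := card_filter_add_card_filter_not (s := I) (fun t => ψ.coord t = 0)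
        simp only [ne_eq] at *
        congr 3
        omega

end CharacterDistribution

lemma Module.Basis.repr_eq_zero_of_apply_eq_smul {ι K M : Type*} [CommRing K] [NoZeroDivisors K]
    [AddCommGroup M] [Module K M] (b : Module.Basis ι K M) {T : M →ₗ[K] M} {μ : ι → K}
    (hT : ∀ i, T (b i) = μ i • b i) {c : K} {x : M} (hx : T x = c • x) {i : ι} (hi : μ i ≠ c) :
    b.repr x i = 0 := by
  have hdiag : b.repr (T x) i = μ i * b.repr x i := by
    have := b.ext (f₁ := Finsupp.lapply i ∘ₗ b.repr.toLinearMap ∘ₗ T)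
      (f₂ := μ i • (Finsupp.lapply i ∘ₗ b.repr.toLinearMap)) fun j => by
        by_cases hij : j = i
        · subst hij; simp [hT]
        · simp [hT, hij]
    simpa using LinearMap.congr_fun this x
  rw [hx, map_smul, Finsupp.smul_apply, smul_eq_mul] at hdiag
  have : (μ i - c) * b.repr x i = 0 := by linear_combination hdiag.symm
  exact (mul_eq_zero.1 this).resolve_left (sub_ne_zero.2 hi)

section Spectrum
variable {ι G : Type*} [Fintype ι] [DecidableEq ι] [AddCommGroup G] [Fintype G] [DecidableEq G]

lemma hammingAdj_addChar {R : Type*} [CommRing R] [IsDomain R] (ψ : AddChar (ι → G) R) :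
    hammingAdj (ψ : (ι → G) → R) =
      (((Fintype.card G : R) - 1) * Fintype.card ι - Fintype.card G * #ψ.coordSupport) • ⇑ψ := by
  ext α
  rw [hammingAdj_apply_eq_coeff, localDistPoly_addChar, coeff_C_mul, inter_univ, card_univ,
    coeff_one_krawGenPoly, Nat.cast_sub (card_le_univ _), Pi.smul_apply, smul_eq_mul]
  ring

lemma repr_eq_zero_of_card_coordSupport_ne {f : (ι → G) → ℂ} {h : ℕ}
    (hf : hammingAdj f = (((Fintype.card G : ℂ) - 1) * Fintype.card ι - Fintype.card G * h) • f)
    {ψ : AddChar (ι → G) ℂ} (hψ : #ψ.coordSupport ≠ h) :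
    (AddChar.complexBasis (ι → G)).repr f ψ = 0 := by
  refine Module.Basis.repr_eq_zero_of_apply_eq_smul _ (fun ψ => ?_) hf (i := ψ) (μ := fun ψ =>
    ((Fintype.card G : ℂ) - 1) * Fintype.card ι - Fintype.card G * #ψ.coordSupport) ?_
  · rw [AddChar.complexBasis_apply, hammingAdj_addChar]
  · have hq : (Fintype.card G : ℂ) ≠ 0 := Nat.cast_ne_zero.2 Fintype.card_ne_zero
    intro heq
    have : (Fintype.card G : ℂ) * #ψ.coordSupport = Fintype.card G * h := by
      linear_combination -heq
    exact hψ (by exact_mod_cast mul_left_cancel₀ hq this)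

theorem localDistPoly_compl_eq_of_eigen {f : (ι → G) → ℂ} {h : ℕ}
    (hf : hammingAdj f = (((Fintype.card G : ℂ) - 1) * Fintype.card ι - Fintype.card G * h) • f)
    {I : Finset ι} (hk1 : #I ≤ h) (hk2 : #I ≤ Fintype.card ι - h) (α : ι → G) :
    localDistPoly α Iᶜ f = krawGenPoly ℂ (Fintype.card G) (h - #I) (Fintype.card ι - 2 * #I) *
      krawSubst ℂ (Fintype.card G) #I (localDistPoly α I f) := by
  set b := AddChar.complexBasis (ι → G)
  rw [← b.sum_repr f]
  simp only [map_sum, map_smul, mul_sum, mul_smul_comm]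
  refine sum_congr rfl fun ψ _ => ?_
  by_cases hψ : #ψ.coordSupport = h
  · have hsplit := card_inter_add_card_sdiff ψ.coordSupport I
    have hle : #(ψ.coordSupport ∩ I) ≤ #I := card_le_card inter_subset_right
    have hh : h ≤ Fintype.card ι := hψ ▸ card_le_univ _
    rw [sdiff_eq_inter_compl] at hsplit
    rw [AddChar.complexBasis_apply, localDistPoly_addChar, localDistPoly_addChar]
    simp only [← smul_eq_C_mul, map_smul, mul_smul_comm]
    rw [krawSubst_krawGenPoly _ hle, krawGenPoly_mul_krawGenPoly _ (by omega) (Nat.sub_le _ _),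
      card_compl]
    congr 3 <;> omega
  · rw [repr_eq_zero_of_card_coordSupport_ne hf hψ, zero_smul, zero_smul]

end Spectrum

lemma locdist_eq_coeff_localDistPoly {q n : ℕ} (f : (Fin n → Fin q) → ℂ) (α : Fin n → Fin q)
    (I : Finset (Fin n)) (j : ℕ) : locdist f α I j = (localDistPoly α I f).coeff j := by
  rw [coeff_localDistPoly, locdist]
  congr

theorem stmt7_general (q n h k : ℕ) (hq : 2 ≤ q) (hk1 : k ≤ h) (hk2 : k ≤ n - h)
    (f : (Fin n → Fin q) → ℂ)
    (hf : ∀ α, ∑ β ∈ Finset.univ.filter (fun β => hammingDist α β = 1), f β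
            = (((q:ℂ)-1)*n - q*h) * f α)
    (I : Finset (Fin n)) (hI : I.card = k)
    (α : Fin n → Fin q) (j : ℕ) :
    locdist f α Iᶜ j =
      ∑ i ∈ Finset.range (j+1),
        ((-1:ℂ)^i * ∑ l ∈ Finset.range (j-i+1),
            (kraw q (j-i-l) (h-k) (n-2*k) : ℂ) * ((q:ℂ)-2)^l * (((k-i).choose l : ℕ) : ℂ))
          * locdist f α I i := by
  have : NeZero q := ⟨by omega⟩
  have hf' : hammingAdj f = (((Fintype.card (Fin q) : ℂ) - 1) * Fintype.card (Fin n) -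
      Fintype.card (Fin q) * h) • f := by
    ext α
    simp [hammingAdj, hf]
  have hgen := localDistPoly_compl_eq_of_eigen hf' (I := I) (by simpa [hI]) (by simpa [hI]) α
  simp only [Fintype.card_fin, hI] at hgen
  simp only [locdist_eq_coeff_localDistPoly]
  rw [hgen, coeff_krawGenPoly_mul_krawSubst _ _ _ _ fun i hi =>
    coeff_localDistPoly_eq_zero α I f (hI ▸ hi)]

/-- Case k ≤ min{h, n−h}: components of the (Ī,α)-local distribution of a
λ-eigenfunction expressed through the (I,α)-local distribution. -/
theorem stmt7 (q n h k : ℕ) (hq : 2 ≤ q) (hh : h ≤ n) (hk1 : k ≤ h) (hk2 : k ≤ n - h)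
    (f : (Fin n → Fin q) → ℂ)
    (hf : ∀ α, ∑ β ∈ Finset.univ.filter (fun β => hammingDist α β = 1), f β
            = (((q:ℂ)-1)*n - q*h) * f α)
    (I : Finset (Fin n)) (hI : I.card = k)
    (α : Fin n → Fin q) (j : ℕ) (hj : j ≤ n - k) :
    locdist f α Iᶜ j =
      ∑ i ∈ Finset.range (j+1),
        ((-1:ℂ)^i * ∑ l ∈ Finset.range (j-i+1),
            (kraw q (j-i-l) (h-k) (n-2*k) : ℂ) * ((q:ℂ)-2)^l * (((k-i).choose l : ℕ) : ℂ))
          * locdist f α I i :=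
  stmt7_general q n h k hq hk1 hk2 f hf I hI α j
end
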